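/- arXiv:2206.01555 — 2 statements merged into one kernel-verified Lean document; each statement's English description precedes it below -/
import Mathlib

section
/- Assume every descending chain X₁ ⊇ X₂ ⊇ ⋯ of closed subsets of a polynomial functor P stabilizes. Then for each closed subset X ⊆ P there exists n₀ ∈ ℕ such that for all finite-dimensional V: X(V) = ⋂_{φ ∈ Hom(V, K^{n₀})} P(φ)⁻¹(X(K^{n₀})). That is, X is defined by its 'equations' in P(K^{n₀}). -/
open CategoryTheory

/-! The subfunctors `Xₙ(V) = ⋂_{φ : V → Kⁿ} P(φ)⁻¹(X(Kⁿ))`, here `Subfunctor.definedBy (X(Kⁿ))`,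
form a descending chain because `Kⁿ` is a retract of `Kⁿ⁺¹`, and `Xₙ(V) = X(V)` as soon as
`dim V ≤ n`, because then `V` is a retract of `Kⁿ`. Noetherianity makes the chain stationary from
some `n₀` on, so `X(V) = X_{n₀ + dim V}(V) = X_{n₀}(V)`. -/

namespace CategoryTheory.Subfunctor

variable {C : Type*} [Category C] {P : C ⥤ Type*}

def definedBy {A : C} (S : Set (P.obj A)) : Subfunctor P where
  obj V := ⋂ φ : V ⟶ A, (fun p => P.map φ p) ⁻¹' S
  map ψ x hx := by
    simp only [Set.mem_preimage, Set.mem_iInter] at hx ⊢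
    intro φ
    simpa only [Functor.map_comp_apply] using hx (ψ ≫ φ)

@[simp]
theorem mem_definedBy_obj {A V : C} {S : Set (P.obj A)} {x : P.obj V} :
    x ∈ (definedBy S).obj V ↔ ∀ φ : V ⟶ A, P.map φ x ∈ S :=
  Set.mem_iInter

theorem le_definedBy_iff {A : C} {S : Set (P.obj A)} {X : Subfunctor P} :
    X ≤ definedBy S ↔ X.obj A ⊆ S := by
  refine ⟨fun h x hx => ?_, fun h V x hx => mem_definedBy_obj.2 fun φ => h (X.map φ hx)⟩
  simpa using mem_definedBy_obj.1 (h A hx) (𝟙 A)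

theorem definedBy_obj_subset_of_retract (X : Subfunctor P) {V A : C} (h : Retract V A) :
    (definedBy (X.obj A)).obj V ⊆ X.obj V := by
  intro x hx
  have hr : P.map h.r (P.map h.i x) ∈ X.obj V := X.map h.r (mem_definedBy_obj.1 hx h.i)
  rwa [← Functor.map_comp_apply, h.retract, Functor.map_id_apply] at hr

theorem definedBy_obj_eq_of_retract (X : Subfunctor P) {V A : C} (h : Retract V A) :
    (definedBy (X.obj A)).obj V = X.obj V :=
  (definedBy_obj_subset_of_retract X h).antisymm (le_definedBy_iff.2 subset_rfl V)

theorem definedBy_antitone_of_retract (X : Subfunctor P) {A B : C} (h : Retract A B) :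
    definedBy (X.obj B) ≤ definedBy (X.obj A) :=
  le_definedBy_iff.2 (definedBy_obj_subset_of_retract X h)

end CategoryTheory.Subfunctor

namespace FGModuleCat

variable {K : Type*} [Field K]

noncomputable def retractOfFinrankLe {V : FGModuleCat K} {n : ℕ} (h : Module.finrank K V ≤ n) :
    Retract V (FGModuleCat.of K (Fin n → K)) :=
  let r : (Fin n → K) →ₗ[K] V :=
    (Module.finBasis K V).equivFun.symm.toLinearMap ∘ₗ LinearMap.funLeft K K (Fin.castLE h)
  have hr : Function.Surjective r :=
    (Module.finBasis K V).equivFun.symm.surjective.comp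
      (LinearMap.funLeft_surjective_of_injective _ _ _ (Fin.castLE_injective h))
  have hi := r.exists_rightInverse_of_surjective (LinearMap.range_eq_top.2 hr)
  { i := ofHom (Classical.choose hi)
    r := ofHom r
    retract := hom_ext (Classical.choose_spec hi) }

end FGModuleCat

/-- Assume every descending chain of closed subsets (subfunctors) of the functor `P` on
finite-dimensional `K`-vector spaces stabilizes.  Then every subfunctor `X` of `P` is
defined by its "equations" in `P(K^{n₀})` for some `n₀`:
`X(V) = ⋂_{φ : V → K^{n₀}} P(φ)⁻¹(X(K^{n₀}))` for all `V`. -/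
theorem stmt5 (K : Type) [Field K] (P : FGModuleCat K ⥤ Type)
    (hNoeth : ∀ Y : ℕ → ∀ V : FGModuleCat K, Set (P.obj V),
      (∀ n, ∀ {U V : FGModuleCat K} (φ : U ⟶ V), ∀ x ∈ Y n U, P.map φ x ∈ Y n V) →
      (∀ n, ∀ V : FGModuleCat K, Y (n + 1) V ⊆ Y n V) →
      ∃ n₀ : ℕ, ∀ n, n₀ ≤ n → Y n = Y n₀)
    (X : ∀ V : FGModuleCat K, Set (P.obj V))
    (hX : ∀ {U V : FGModuleCat K} (φ : U ⟶ V), ∀ x ∈ X U, P.map φ x ∈ X V) :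
    ∃ n₀ : ℕ, ∀ V : FGModuleCat K,
      X V = ⋂ φ : V ⟶ FGModuleCat.of K (Fin n₀ → K),
        (fun p => P.map φ p) ⁻¹' (X (FGModuleCat.of K (Fin n₀ → K))) := by
  let X' : Subfunctor P := ⟨X, fun φ x hx => hX φ x hx⟩
  let Kn (n : ℕ) : FGModuleCat K := FGModuleCat.of K (Fin n → K)
  have finrank_Kn (n : ℕ) : Module.finrank K (Kn n) = n := Module.finrank_fin_fun K
  obtain ⟨n₀, hn₀⟩ := hNoeth (fun n => (Subfunctor.definedBy (X'.obj (Kn n))).obj)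
    (fun n _ _ φ x hx => (Subfunctor.definedBy _).map φ hx)
    (fun n => X'.definedBy_antitone_of_retract
      (FGModuleCat.retractOfFinrankLe ((finrank_Kn n).trans_le n.le_succ)))
  refine ⟨n₀, fun V => ?_⟩
  calc X V = (Subfunctor.definedBy (X'.obj (Kn (n₀ + Module.finrank K V)))).obj V :=
        (X'.definedBy_obj_eq_of_retract
          (FGModuleCat.retractOfFinrankLe (Nat.le_add_left _ _))).symm
    _ = _ := congrFun (hn₀ _ (Nat.le_add_right _ _)) V
end

section
/- Let B be an affine variety over a field K, let Q be a functor on finite-dimensional K-vector spaces with values in finite-dimensional K-vector spaces, let R be a subfunctor of Q with quotient Q' = Q/R and projection π : Q → Q'. Let X be a subfunctor of B × Q and let X' be the subfunctor of B × Q' given by X'(V) = closure of (id_B × π_V)(X(V)). Fix U and suppose: (i) X is defined by its equations in B × Q(U), i.e., X(V) = {(b,q) : (b, Q(φ)q) ∈ X(U) for all linear φ : V → U}; (ii) X(U) = (id_B × π_U)⁻¹(X'(U)). Then for every V, X(V) = (id_B × π_V)⁻¹(X'(V)); in particular X = X' × R. -/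
open CategoryTheory

theorem stmt6_general (K : Type) [Field K] (B : Type)
    (Q Q' : FGModuleCat K ⥤ Type) (π : Q ⟶ Q')
    (X : ∀ V : FGModuleCat K, Set (B × Q.obj V))
    (X' : ∀ V : FGModuleCat K, Set (B × Q'.obj V))
    (hX' : ∀ {V W : FGModuleCat K} (φ : V ⟶ W), ∀ b q', (b, q') ∈ X' V →
      (b, Q'.map φ q') ∈ X' W)
    (himg : ∀ (V : FGModuleCat K) (b : B) (q : Q.obj V), (b, q) ∈ X V → (b, π.app V q) ∈ X' V)
    (U : FGModuleCat K)
    (hdef : ∀ (V : FGModuleCat K) (b : B) (q : Q.obj V),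
      (∀ φ : V ⟶ U, (b, Q.map φ q) ∈ X U) → (b, q) ∈ X V)
    (hU : ∀ (b : B) (q : Q.obj U), (b, π.app U q) ∈ X' U → (b, q) ∈ X U) :
    ∀ (V : FGModuleCat K) (b : B) (q : Q.obj V),
      (b, q) ∈ X V ↔ (b, π.app V q) ∈ X' V := by
  intro V b q
  refine ⟨himg V b q, fun h => hdef V b q fun φ => hU b _ ?_⟩
  rw [NatTrans.naturality_apply π φ q]
  exact hX' φ b _ h

/-- Projection lemma, part 1 (set-theoretic version).  Let `Q, Q'` be functors on
finite-dimensional `K`-vector spaces with a natural projection `π : Q ⟶ Q'`, `B` an affine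
variety (a set suffices), `X` a subfunctor of `B × Q` and `X'` a subfunctor of `B × Q'`
containing the image of `X` under `id_B × π`.  If (i) `X` is defined by its equations in
`B × Q(U)` and (ii) `X(U) = (id_B × π_U)⁻¹(X'(U))`, then for every `V`,
`X(V) = (id_B × π_V)⁻¹(X'(V))`; in particular `X = X' × R`. -/
theorem stmt6 (K : Type) [Field K] (B : Type)
    (Q Q' : FGModuleCat K ⥤ Type) (π : Q ⟶ Q')
    (X : ∀ V : FGModuleCat K, Set (B × Q.obj V))
    (X' : ∀ V : FGModuleCat K, Set (B × Q'.obj V))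
    (hX : ∀ {V W : FGModuleCat K} (φ : V ⟶ W), ∀ b q, (b, q) ∈ X V → (b, Q.map φ q) ∈ X W)
    (hX' : ∀ {V W : FGModuleCat K} (φ : V ⟶ W), ∀ b q', (b, q') ∈ X' V →
      (b, Q'.map φ q') ∈ X' W)
    (himg : ∀ (V : FGModuleCat K) (b : B) (q : Q.obj V), (b, q) ∈ X V → (b, π.app V q) ∈ X' V)
    (U : FGModuleCat K)
    (hdef : ∀ (V : FGModuleCat K) (b : B) (q : Q.obj V),
      (∀ φ : V ⟶ U, (b, Q.map φ q) ∈ X U) → (b, q) ∈ X V)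
    (hU : ∀ (b : B) (q : Q.obj U), (b, π.app U q) ∈ X' U → (b, q) ∈ X U) :
    ∀ (V : FGModuleCat K) (b : B) (q : Q.obj V),
      (b, q) ∈ X V ↔ (b, π.app V q) ∈ X' V :=
  stmt6_general K B Q Q' π X X' hX' himg U hdef hU
end
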